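/- Let A = A₁ × A₂ for finite nonempty action sets A₁, A₂, and let π = (π₁, π₂) be a mixed strategy profile such that at least one of π₁, π₂ is not a point-mass distribution (i.e., has support of size at least 2). Then for every reward function R : A → ℝ and every ε > 0 there exists R' : A → ℝ with max_{a∈A} |R'(a) − R(a)| ≤ ε such that π is not a Nash equilibrium of (A, R'). In particular, the set of reward functions R for which π is the unique Nash equilibrium of (A, R) has empty interior with respect to the sup norm. -/

import Mathlib

open Finset

/-- A mixed strategy: nonnegative weights summing to one. -/
def IsMixed {α : Type*} [Fintype α] (p : α → ℝ) : Prop :=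
  (∀ a, 0 ≤ p a) ∧ ∑ a, p a = 1

/-- The point-mass distribution at `a`. -/
def pmass {α : Type*} [DecidableEq α] (a : α) : α → ℝ :=
  fun x => if x = a then 1 else 0

/-- Expected reward of a mixed strategy profile `(p, q)` in the game with reward `R`. -/
def expR {A₁ A₂ : Type*} [Fintype A₁] [Fintype A₂]
    (R : A₁ × A₂ → ℝ) (p : A₁ → ℝ) (q : A₂ → ℝ) : ℝ :=
  ∑ a₁, ∑ a₂, p a₁ * q a₂ * R (a₁, a₂)

/-- `(p, q)` is a (mixed) Nash equilibrium of the zero-sum game with reward `R`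
(player 1 minimizes `R`, player 2 maximizes `R`). -/
def IsNE {A₁ A₂ : Type*} [Fintype A₁] [Fintype A₂] [DecidableEq A₁] [DecidableEq A₂]
    (R : A₁ × A₂ → ℝ) (p : A₁ → ℝ) (q : A₂ → ℝ) : Prop :=
  IsMixed p ∧ IsMixed q ∧
  (∀ a₂, expR R p (pmass a₂) ≤ expR R p q) ∧
  (∀ a₁, expR R p q ≤ expR R (pmass a₁) q)

/-- The set of all mixed Nash equilibria of the game with reward `R`. -/
def NESet {A₁ A₂ : Type*} [Fintype A₁] [Fintype A₂] [DecidableEq A₁] [DecidableEq A₂]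
    (R : A₁ × A₂ → ℝ) : Set ((A₁ → ℝ) × (A₂ → ℝ)) :=
  {pq | IsNE R pq.1 pq.2}

/-- The pure strategy profile `π` is a strict Nash equilibrium of the game with reward `R`. -/
def IsStrictNE {A₁ A₂ : Type*} (R : A₁ × A₂ → ℝ) (π : A₁ × A₂) : Prop :=
  (∀ a₂, a₂ ≠ π.2 → R (π.1, a₂) < R π) ∧
  (∀ a₁, a₁ ≠ π.1 → R π < R (a₁, π.2))

lemma expR_pmass_left {A₁ A₂ : Type*} [Fintype A₁] [Fintype A₂] [DecidableEq A₁]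
    (R : A₁ × A₂ → ℝ) (a₁ : A₁) (q : A₂ → ℝ) :
    expR R (pmass a₁) q = ∑ a₂, q a₂ * R (a₁, a₂) := by
  simp [expR, pmass, ite_mul, one_mul, zero_mul, Finset.sum_ite_eq']

lemma expR_avg {A₁ A₂ : Type*} [Fintype A₁] [Fintype A₂] [DecidableEq A₁]
    (R : A₁ × A₂ → ℝ) (p : A₁ → ℝ) (q : A₂ → ℝ) :
    ∑ a₁, p a₁ * expR R (pmass a₁) q = expR R p q := by
  simp only [expR_pmass_left, Finset.mul_sum]
  unfold expR
  exact Finset.sum_congr rfl fun a₁ _ => Finset.sum_congr rfl fun a₂ _ => by ring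

lemma expR_neg_swap {A₁ A₂ : Type*} [Fintype A₁] [Fintype A₂]
    (R : A₁ × A₂ → ℝ) (p : A₁ → ℝ) (q : A₂ → ℝ) :
    expR (fun b : A₂ × A₁ => -R (b.2, b.1)) q p = - expR R p q := by
  unfold expR
  rw [Finset.sum_comm, ← Finset.sum_neg_distrib]
  exact Finset.sum_congr rfl fun a₁ _ => by
    rw [← Finset.sum_neg_distrib]
    exact Finset.sum_congr rfl fun a₂ _ => by ring

lemma isNE_swap {A₁ A₂ : Type*} [Fintype A₁] [Fintype A₂] [DecidableEq A₁] [DecidableEq A₂]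
    (R : A₁ × A₂ → ℝ) (p : A₁ → ℝ) (q : A₂ → ℝ) (h : IsNE R p q) :
    IsNE (fun b : A₂ × A₁ => -R (b.2, b.1)) q p := by
  obtain ⟨h1, h2, h3, h4⟩ := h
  refine ⟨h2, h1, fun a₁ => ?_, fun a₂ => ?_⟩
  · rw [expR_neg_swap, expR_neg_swap]
    exact neg_le_neg (h4 a₁)
  · rw [expR_neg_swap, expR_neg_swap]
    exact neg_le_neg (h3 a₂)

lemma row_unstable {A₁ A₂ : Type*} [Fintype A₁] [Fintype A₂] [DecidableEq A₁] [DecidableEq A₂]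
    (p : A₁ → ℝ) (q : A₂ → ℝ) (hp : IsMixed p) (hq : IsMixed q)
    (hcard : 2 ≤ ({a | p a ≠ 0} : Finset A₁).card)
    (R : A₁ × A₂ → ℝ) (ε : ℝ) (hε : 0 < ε) :
    ∃ R' : A₁ × A₂ → ℝ, (∀ a, |R' a - R a| ≤ ε) ∧ ¬ IsNE R' p q := by
  obtain ⟨hp0, hp1⟩ := hp
  obtain ⟨hq0, hq1⟩ := hq
  have hmemsupp : ∀ a : A₁, a ∈ ({a | p a ≠ 0} : Finset A₁) ↔ p a ≠ 0 := by
    intro a; simp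
  have hex : ∃ a, p a ≠ 0 ∧ expR R (pmass a) q ≤ expR R p q := by
    by_contra h
    push_neg at h
    have hlt : ∑ a₁, p a₁ * expR R p q < ∑ a₁, p a₁ * expR R (pmass a₁) q := by
      apply Finset.sum_lt_sum
      · intro i _
        rcases eq_or_ne (p i) 0 with h0 | h0
        · simp [h0]
        · exact le_of_lt (mul_lt_mul_of_pos_left (h i h0) ((hp0 i).lt_of_ne' h0))
      · have hne : ({a | p a ≠ 0} : Finset A₁).Nonempty :=
          Finset.card_pos.mp (by omega)
        obtain ⟨a, ha⟩ := hne
        rw [hmemsupp] at ha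
        exact ⟨a, Finset.mem_univ a,
          mul_lt_mul_of_pos_left (h a ha) ((hp0 a).lt_of_ne' ha)⟩
    rw [← Finset.sum_mul, hp1, one_mul, expR_avg] at hlt
    exact lt_irrefl _ hlt
  obtain ⟨astar, hane, hEle⟩ := hex
  have hplt1 : p astar < 1 := by
    obtain ⟨a', ha'mem, ha'ne⟩ :=
      Finset.exists_mem_ne (s := ({a | p a ≠ 0} : Finset A₁)) (by omega) astar
    rw [hmemsupp] at ha'mem
    have h2 : p astar + p a' = ∑ a ∈ ({astar, a'} : Finset A₁), p a := by
      rw [Finset.sum_pair (Ne.symm ha'ne)]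
    have h3 : ∑ a ∈ ({astar, a'} : Finset A₁), p a ≤ ∑ a, p a :=
      Finset.sum_le_sum_of_subset_of_nonneg (Finset.subset_univ _)
        (fun i _ _ => hp0 i)
    have h4 : 0 < p a' := (hp0 a').lt_of_ne' ha'mem
    rw [hp1] at h3
    linarith
  refine ⟨fun a => R a - (if a.1 = astar then ε else 0), fun a => ?_, ?_⟩
  · show |R a - (if a.1 = astar then ε else 0) - R a| ≤ ε
    rcases eq_or_ne a.1 astar with h | h
    · rw [if_pos h, show R a - ε - R a = -ε by ring, abs_neg, abs_of_pos hε]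
    · rw [if_neg h]; simp [hε.le]
  · rintro ⟨-, -, -, h4⟩
    have key := h4 astar
    have e1 : expR (fun a => R a - (if a.1 = astar then ε else 0)) p q
        = expR R p q - p astar * ε := by
      unfold expR
      have step : ∀ a₁ : A₁,
          ∑ a₂, p a₁ * q a₂ * (R (a₁, a₂) - (if a₁ = astar then ε else 0))
          = (∑ a₂, p a₁ * q a₂ * R (a₁, a₂)) - p a₁ * (if a₁ = astar then ε else 0) := by
        intro a₁
        have hin : ∑ a₂, p a₁ * q a₂ * (if a₁ = astar then ε else 0)
            = p a₁ * (if a₁ = astar then ε else 0) := by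
          calc ∑ a₂, p a₁ * q a₂ * (if a₁ = astar then ε else 0)
              = (p a₁ * (if a₁ = astar then ε else 0)) * ∑ a₂, q a₂ := by
                rw [Finset.mul_sum]
                exact Finset.sum_congr rfl fun a₂ _ => by ring
            _ = p a₁ * (if a₁ = astar then ε else 0) := by rw [hq1, mul_one]
        rw [← hin, ← Finset.sum_sub_distrib]
        exact Finset.sum_congr rfl fun a₂ _ => by ring
      simp only [step]
      rw [Finset.sum_sub_distrib]
      congr 1
      simp [mul_ite, mul_zero, Finset.sum_ite_eq']
    have e2 : expR (fun a => R a - (if a.1 = astar then ε else 0)) (pmass astar) q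
        = expR R (pmass astar) q - ε := by
      rw [expR_pmass_left, expR_pmass_left]
      simp only [if_pos rfl]
      calc ∑ a₂, q a₂ * (R (astar, a₂) - ε)
          = ∑ a₂, (q a₂ * R (astar, a₂) - q a₂ * ε) :=
            Finset.sum_congr rfl fun a₂ _ => by ring
        _ = (∑ a₂, q a₂ * R (astar, a₂)) - ∑ a₂, q a₂ * ε := Finset.sum_sub_distrib _ _
        _ = (∑ a₂, q a₂ * R (astar, a₂)) - ε := by rw [← Finset.sum_mul, hq1, one_mul]
    rw [e1, e2] at key
    nlinarith


/-- A properly mixed strategy profile (one of the two marginals has support of size at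
least 2) can be destroyed as a Nash equilibrium by an arbitrarily small perturbation of
the reward function; in particular, the set of reward functions for which it is the
unique Nash equilibrium has empty interior (sup-norm / product topology on `A → ℝ`). -/
theorem mixed_NE_unstable {A₁ A₂ : Type*} [Fintype A₁] [Fintype A₂]
    [DecidableEq A₁] [DecidableEq A₂] [Nonempty A₁] [Nonempty A₂]
    (p : A₁ → ℝ) (q : A₂ → ℝ) (hp : IsMixed p) (hq : IsMixed q)
    (hsupp : 2 ≤ ({a | p a ≠ 0} : Finset A₁).card ∨
             2 ≤ ({a | q a ≠ 0} : Finset A₂).card) :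
    (∀ (R : A₁ × A₂ → ℝ) (ε : ℝ), 0 < ε →
      ∃ R' : A₁ × A₂ → ℝ, (∀ a, |R' a - R a| ≤ ε) ∧ ¬ IsNE R' p q) ∧
    interior {R : A₁ × A₂ → ℝ | NESet R = {(p, q)}} = ∅ := by
  have part1 : ∀ (R : A₁ × A₂ → ℝ) (ε : ℝ), 0 < ε →
      ∃ R' : A₁ × A₂ → ℝ, (∀ a, |R' a - R a| ≤ ε) ∧ ¬ IsNE R' p q := by
    intro R ε hε
    rcases hsupp with h | h
    · exact row_unstable p q hp hq h R ε hε
    · obtain ⟨S', hS'close, hS'ne⟩ :=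
        row_unstable q p hq hp h (fun b => -R (b.2, b.1)) ε hε
      refine ⟨fun a => -S' (a.2, a.1), fun a => ?_, ?_⟩
      · have h1 := hS'close (a.2, a.1)
        simp only [sub_neg_eq_add] at h1
        show |(-S' (a.2, a.1)) - R a| ≤ ε
        rw [show (-S' (a.2, a.1)) - R a = -(S' (a.2, a.1) + R a) by ring, abs_neg]
        simpa using h1
      · intro hNE
        have hs := isNE_swap _ p q hNE
        have heq : (fun b : A₂ × A₁ =>
            -((fun a : A₁ × A₂ => -S' (a.2, a.1)) (b.2, b.1))) = S' := by
          funext b; simp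
        rw [heq] at hs
        exact hS'ne hs
  refine ⟨part1, ?_⟩
  rw [Set.eq_empty_iff_forall_notMem]
  intro R hR
  rw [mem_interior_iff_mem_nhds] at hR
  obtain ⟨ε, hε, hball⟩ := Metric.mem_nhds_iff.mp hR
  obtain ⟨R', hR'c, hR'ne⟩ := part1 R (ε / 2) (by linarith)
  have hmem : R' ∈ Metric.ball R ε := by
    rw [Metric.mem_ball]
    have hd : dist R' R ≤ ε / 2 := by
      rw [dist_pi_le_iff (by linarith)]
      intro a; rw [Real.dist_eq]; exact hR'c a
    linarith
  have hset : NESet R' = {(p, q)} := hball hmem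
  have hpq : ((p, q) : (A₁ → ℝ) × (A₂ → ℝ)) ∈ NESet R' := by
    rw [hset]; exact Set.mem_singleton _
  exact hR'ne hpq
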